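/- Cusp formula for the rotation number (averaged form): Let γ = (x, y, z) : ℝ → ℝ³ be a twice continuously differentiable regular closed Legendrian curve such that y' has only finitely many zeros s₁, …, s_k in [0, 2π), each nondegenerate (y''(sᵢ) ≠ 0). Then rot(γ) = (1/2)·Σᵢ sign(x'(sᵢ)·y''(sᵢ)); that is, rot(γ) = (c₋ − c₊)/2, where c₋ is the number of zeros of y' with x'·y'' > 0 (downward-oriented cusps of the front) and c₊ is the number of zeros with x'·y'' < 0 (upward-oriented cusps). -/

import Mathlib

open Real

noncomputable section

/-- A regular closed curve in the plane: continuously differentiable,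
`2π`-periodic, with nowhere vanishing derivative. -/
def IsRegularClosedCurve (γ : ℝ → ℝ × ℝ) : Prop :=
  ContDiff ℝ 1 γ ∧ (∀ s, γ (s + 2 * π) = γ s) ∧ ∀ s, deriv γ s ≠ 0

/-- `γ` has rotation number `n`: there is a continuous angle function `θ` for the
velocity vector with `θ (2π) - θ 0 = 2πn`. -/
def HasRotationNumber (γ : ℝ → ℝ × ℝ) (n : ℤ) : Prop :=
  ∃ θ : ℝ → ℝ, Continuous θ ∧
    (∀ s, deriv γ s = ‖deriv γ s‖ • (Real.cos (θ s), Real.sin (θ s))) ∧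
    θ (2 * π) - θ 0 = 2 * π * (n : ℝ)

/-- A regular homotopy: a family of regular closed curves, jointly continuous
in `(s, t)` together with its `s`-derivative, for `t ∈ [0,1]`. -/
def IsRegularHomotopy (Γ : ℝ → ℝ → ℝ × ℝ) : Prop :=
  (∀ t ∈ Set.Icc (0:ℝ) 1, IsRegularClosedCurve (Γ t)) ∧
  ContinuousOn (fun p : ℝ × ℝ => Γ p.2 p.1) (Set.univ ×ˢ Set.Icc (0:ℝ) 1) ∧
  ContinuousOn (fun p : ℝ × ℝ => deriv (Γ p.2) p.1) (Set.univ ×ˢ Set.Icc (0:ℝ) 1)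

def RegularlyHomotopic (γ₀ γ₁ : ℝ → ℝ × ℝ) : Prop :=
  ∃ Γ : ℝ → ℝ → ℝ × ℝ, IsRegularHomotopy Γ ∧ Γ 0 = γ₀ ∧ Γ 1 = γ₁

/-- The coordinate functions of a space curve `γ = (x, y, z) : ℝ → ℝ³`. -/
def curveX (γ : ℝ → ℝ × ℝ × ℝ) : ℝ → ℝ := fun s => (γ s).1
def curveY (γ : ℝ → ℝ × ℝ × ℝ) : ℝ → ℝ := fun s => (γ s).2.1
def curveZ (γ : ℝ → ℝ × ℝ × ℝ) : ℝ → ℝ := fun s => (γ s).2.2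

/-- The Legendrian condition `z' + x·y' ≡ 0` for the standard contact
structure `ξ = ker (dz + x dy)` on `ℝ³`. -/
def IsLegendrian (γ : ℝ → ℝ × ℝ × ℝ) : Prop :=
  ∀ s, deriv (curveZ γ) s + curveX γ s * deriv (curveY γ) s = 0

/-- A regular closed Legendrian curve in `(ℝ³, ξ)`. -/
def IsRegularClosedLegendrian (γ : ℝ → ℝ × ℝ × ℝ) : Prop :=
  ContDiff ℝ 1 γ ∧ (∀ s, γ (s + 2 * π) = γ s) ∧ (∀ s, deriv γ s ≠ 0) ∧ IsLegendrian γ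

/-- The Lagrangian projection `(x, y, z) ↦ (x, y)`. -/
def LagrangianProj (γ : ℝ → ℝ × ℝ × ℝ) : ℝ → ℝ × ℝ :=
  fun s => ((γ s).1, (γ s).2.1)

/-- The rotation number of a Legendrian curve, measured in the frame
`e₁ = ∂ₓ`, `e₂ = ∂_y - x ∂_z` of `ξ`, in which `γ'` has coefficients `(x', y')`. -/
def HasLegendrianRotationNumber (γ : ℝ → ℝ × ℝ × ℝ) (n : ℤ) : Prop :=
  ∃ θ : ℝ → ℝ, Continuous θ ∧
    (∀ s, (deriv (curveX γ) s, deriv (curveY γ) s) =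
      ‖(deriv (curveX γ) s, deriv (curveY γ) s)‖ • (Real.cos (θ s), Real.sin (θ s))) ∧
    θ (2 * π) - θ 0 = 2 * π * (n : ℝ)

/-- A Legendrian regular homotopy: a family of regular closed Legendrian
curves, jointly continuous in `(s,t)` together with its `s`-derivative. -/
def IsLegendrianRegularHomotopy (Γ : ℝ → ℝ → ℝ × ℝ × ℝ) : Prop :=
  (∀ t ∈ Set.Icc (0:ℝ) 1, IsRegularClosedLegendrian (Γ t)) ∧
  ContinuousOn (fun p : ℝ × ℝ => Γ p.2 p.1) (Set.univ ×ˢ Set.Icc (0:ℝ) 1) ∧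
  ContinuousOn (fun p : ℝ × ℝ => deriv (Γ p.2) p.1) (Set.univ ×ˢ Set.Icc (0:ℝ) 1)

def LegendrianRegularlyHomotopic (γ₀ γ₁ : ℝ → ℝ × ℝ × ℝ) : Prop :=
  ∃ Γ : ℝ → ℝ → ℝ × ℝ × ℝ, IsLegendrianRegularHomotopy Γ ∧ Γ 0 = γ₀ ∧ Γ 1 = γ₁

/-!
Write `(x', y') = r (cos θ, sin θ)` with `r > 0`. Then `y' = 0` exactly when `θ ∈ πℤ`, and at a
nondegenerate zero of `y'` the angle has derivative `θ' = y'' / x'`, so `θ` crosses `πℤ`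
transversally, upwards exactly when `x' y'' > 0`. Hence `⌊θ / π⌋` is constant between cusps and
jumps by `sign (x' y'')` at each of them. Over one period started at a non-cusp time it therefore
changes by the sum of these signs, and also by `(θ (s + 2π) - θ s) / π = 2 rot γ`.
-/

open Set Filter Topology Function

theorem floor_eq_floor_of_forall_ne_intCast {f : ℝ → ℝ} {s t : ℝ} (hst : s ≤ t)
    (hf : ContinuousOn f (Icc s t)) (h : ∀ x ∈ Icc s t, ∀ k : ℤ, f x ≠ k) :
    ⌊f s⌋ = ⌊f t⌋ := by
  by_contra hne
  rcases lt_or_gt_of_ne hne with hlt | hlt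
  · obtain ⟨x, hx, hfx⟩ := intermediate_value_Icc hst hf
      ⟨(Int.floor_lt.1 hlt).le, Int.floor_le (f t)⟩
    exact h x hx _ hfx
  · obtain ⟨x, hx, hfx⟩ := intermediate_value_Icc' hst hf
      ⟨(Int.floor_lt.1 hlt).le, Int.floor_le (f s)⟩
    exact h x hx _ hfx

theorem HasDerivAt.eventually_nhdsGT_lt {f : ℝ → ℝ} {D c : ℝ} (hf : HasDerivAt f D c)
    (hD : 0 < D) : ∀ᶠ t in 𝓝[>] c, f c < f t := by
  have hslope := (hasDerivAt_iff_tendsto_slope.1 hf).mono_left (nhdsGT_le_nhdsNE c)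
  filter_upwards [hslope.eventually (lt_mem_nhds hD), self_mem_nhdsWithin] with t ht hct
  rw [slope_def_field, div_pos_iff_of_pos_right (sub_pos.2 hct)] at ht
  linarith

theorem HasDerivAt.eventually_nhdsLT_lt {f : ℝ → ℝ} {D c : ℝ} (hf : HasDerivAt f D c)
    (hD : 0 < D) : ∀ᶠ s in 𝓝[<] c, f s < f c := by
  have hslope := (hasDerivAt_iff_tendsto_slope.1 hf).mono_left (nhdsLT_le_nhdsNE c)
  filter_upwards [hslope.eventually (lt_mem_nhds hD), self_mem_nhdsWithin] with s hs hsc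
  rw [slope_comm, slope_def_field, div_pos_iff_of_pos_right (sub_pos.2 hsc)] at hs
  linarith

theorem HasDerivAt.eventually_floor_sub_floor {f : ℝ → ℝ} {D c : ℝ} {k : ℤ}
    (hf : HasDerivAt f D c) (hD : D ≠ 0) (hc : f c = k) :
    ∀ᶠ s in 𝓝[<] c, ∀ᶠ t in 𝓝[>] c, ⌊f t⌋ - ⌊f s⌋ = if 0 < D then 1 else -1 := by
  have hlim : Tendsto f (𝓝 c) (𝓝 k) := hc ▸ hf.continuousAt.tendsto
  have below {l} (hl : l ≤ 𝓝 c) (h : ∀ᶠ x in l, f x < k) : ∀ᶠ x in l, ⌊f x⌋ = k - 1 :=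
    tendsto_pure.1 <| (tendsto_floor_left_pure_sub_one k).comp <|
      tendsto_nhdsWithin_iff.2 ⟨hlim.mono_left hl, h⟩
  have above {l} (hl : l ≤ 𝓝 c) (h : ∀ᶠ x in l, k ≤ f x) : ∀ᶠ x in l, ⌊f x⌋ = k :=
    tendsto_pure.1 <| (tendsto_floor_right_pure k).comp <|
      tendsto_nhdsWithin_iff.2 ⟨hlim.mono_left hl, h⟩
  rcases hD.lt_or_gt with hneg | hpos
  · filter_upwards [above nhdsWithin_le_nhds <| (hf.neg.eventually_nhdsLT_lt
      (neg_pos.2 hneg)).mono fun s hs => (hc ▸ neg_lt_neg_iff.1 hs).le] with s hs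
    filter_upwards [below nhdsWithin_le_nhds <| (hf.neg.eventually_nhdsGT_lt
      (neg_pos.2 hneg)).mono fun t ht => hc ▸ neg_lt_neg_iff.1 ht] with t ht
    simp [hs, ht, hneg.not_gt]
  · filter_upwards [below nhdsWithin_le_nhds <| (hf.eventually_nhdsLT_lt hpos).mono
      fun s hs => hc ▸ hs] with s hs
    filter_upwards [above nhdsWithin_le_nhds <| (hf.eventually_nhdsGT_lt hpos).mono
      fun t ht => (hc ▸ ht).le] with t ht
    simp [hs, ht, hpos]

theorem sub_eq_sum_of_jumps {F ε : ℝ → ℤ} {a b : ℝ} (hab : a ≤ b) (T : Finset ℝ)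
    (hT : ↑T ⊆ Ioo a b)
    (hconst : ∀ s t, a ≤ s → s ≤ t → t ≤ b → (∀ c ∈ T, c ∉ Icc s t) → F s = F t)
    (hjump : ∀ c ∈ T, ∀ᶠ s in 𝓝[<] c, ∀ᶠ t in 𝓝[>] c, F t - F s = ε c) :
    F b - F a = ∑ c ∈ T, ε c := by
  induction T using Finset.induction_on_max generalizing b with
  | empty => simp [hconst a b le_rfl hab le_rfl (by simp)]
  | insert c T hlt ih =>
    have hc : c ∈ Ioo a b := hT (T.mem_insert_self c)
    have hleft : ∀ᶠ s in 𝓝[<] c, (a < s ∧ ∀ x ∈ T, x < s) ∧ s < c :=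
      (Eventually.filter_mono nhdsWithin_le_nhds <| (eventually_gt_nhds hc.1).and <|
        (Finset.eventually_all T).2 fun x hx => eventually_gt_nhds (hlt x hx)).and
        self_mem_nhdsWithin
    obtain ⟨s, ⟨⟨has, hTs⟩, hsc⟩, hs⟩ := (hleft.and (hjump c (T.mem_insert_self c))).exists
    have hright : ∀ᶠ t in 𝓝[>] c, t < b ∧ c < t :=
      ((eventually_lt_nhds hc.2).filter_mono nhdsWithin_le_nhds).and self_mem_nhdsWithin
    obtain ⟨t, ⟨htb, hct⟩, ht⟩ := (hright.and hs).exists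
    have hFt : F t = F b := hconst t b (by linarith [hc.1]) htb.le le_rfl fun x hx hxI => by
      rcases Finset.mem_insert.1 hx with rfl | hx
      · exact hxI.1.not_gt hct
      · linarith [hlt x hx, hxI.1]
    have hFs : F s - F a = ∑ x ∈ T, ε x :=
      ih has.le (fun x hx => ⟨(hT (Finset.mem_insert_of_mem hx)).1, hTs x hx⟩)
        (fun u v hau huv hvs hT' => hconst u v hau huv (by linarith [hc.2]) fun x hx hxI => by
          rcases Finset.mem_insert.1 hx with rfl | hx
          · linarith [hxI.2]
          · exact hT' x hx hxI)
        (fun x hx => hjump x (Finset.mem_insert_of_mem hx))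
    rw [Finset.sum_insert fun h => (hlt c h).false, ← hFs, ← hFt, ← ht]
    ring

theorem Function.Periodic.deriv {f : ℝ → ℝ} {T : ℝ} (hf : Periodic f T) :
    Periodic (deriv f) T :=
  fun s => by rw [← deriv_comp_add_const, hf.funext]

theorem polar_components {a b r φ : ℝ} (h : (a, b) = r • (cos φ, sin φ)) :
    a = r * cos φ ∧ b = r * sin φ := by
  simpa [Prod.ext_iff] using h

theorem polar_snd_eq_zero_iff {a b φ : ℝ} (hab : (a, b) ≠ 0)
    (h : (a, b) = ‖(a, b)‖ • (cos φ, sin φ)) : b = 0 ↔ sin φ = 0 := by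
  rw [(polar_components h).2, mul_eq_zero, or_iff_right (norm_ne_zero_iff.2 hab)]

theorem coe_angle_eq_of_polar {v : ℝ × ℝ} {φ ψ : ℝ} (hv : v ≠ 0)
    (hφ : v = ‖v‖ • (cos φ, sin φ)) (hψ : v = ‖v‖ • (cos ψ, sin ψ)) : (φ : Angle) = ψ := by
  have h := smul_right_injective _ (norm_ne_zero_iff.2 hv) (hφ.symm.trans hψ)
  simp only [Prod.mk.injEq] at h
  exact Angle.cos_sin_inj h.1 h.2

theorem sub_eq_of_coe_angle_add_eq {θ : ℝ → ℝ} {T : ℝ} (hθ : Continuous θ)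
    (h : ∀ s, (θ (s + T) : Angle) = θ s) (s : ℝ) : θ (s + T) - θ s = θ T - θ 0 := by
  -- `θ (· + T)` and `θ + (θ T - θ 0)` lift the same map `ℝ → ℝ / 2πℤ` and agree at `0`
  have hlift := (AddCircle.isCoveringMap_coe (2 * π)).eq_of_comp_eq
    (g₁ := fun s => θ (s + T)) (g₂ := fun s => θ s + (θ T - θ 0))
    (hθ.comp (continuous_add_const T)) (hθ.add continuous_const) ?_ 0 (by simp)
  · linarith [congrFun hlift s]
  · funext s
    have h0 := h 0
    rw [zero_add] at h0
    change (θ (s + T) : Angle) = ((θ s + (θ T - θ 0) : ℝ) : Angle)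
    rw [h s, Angle.coe_add, Angle.coe_sub, h0, sub_self, add_zero]

theorem hasDerivAt_angle_of_snd_eq_zero {u v θ : ℝ → ℝ} {c u₁ v₁ : ℝ}
    (hu : HasDerivAt u u₁ c) (hv : HasDerivAt v v₁ c) (hθ : ContinuousAt θ c)
    (hpolar : ∀ s, (u s, v s) = ‖(u s, v s)‖ • (cos (θ s), sin (θ s)))
    (hu0 : u c ≠ 0) (hv0 : v c = 0) : HasDerivAt θ (v₁ / u c) c := by
  have hne {s} (hs : u s ≠ 0) : (u s, v s) ≠ 0 := fun h => hs (congrArg Prod.fst h)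
  obtain ⟨k, hk⟩ := sin_eq_zero_iff.1 ((polar_snd_eq_zero_iff (hne hu0) (hpolar c)).1 hv0)
  -- near `c`, `θ` stays within `π / 2` of `θ c = kπ`, where it is `kπ + arctan (v / u)`
  have hlocal : θ =ᶠ[𝓝 c] fun s => k * π + arctan (v s / u s) := by
    filter_upwards [hu.continuousAt.eventually_ne hu0,
      hθ.eventually (Ioo_mem_nhds (sub_lt_self (θ c) (half_pos pi_pos))
        (lt_add_of_pos_right (θ c) (half_pos pi_pos)))] with s hs hθs
    have hp := hpolar s
    have hr := norm_ne_zero_iff.2 (hne hs)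
    generalize ‖(u s, v s)‖ = r at hp hr
    obtain ⟨hus, hvs⟩ := polar_components hp
    have htan : tan (θ s - k * π) = v s / u s := by
      rw [tan_sub_int_mul_pi, tan_eq_sin_div_cos, hus, hvs, mul_div_mul_left _ _ hr]
    rw [← htan, arctan_tan] <;> [ring; linarith [hθs.1]; linarith [hθs.2]]
  have hderiv := ((hv.div hu hu0).arctan).const_add ((k : ℝ) * π)
  refine (hderiv.congr_of_eventuallyEq hlocal).congr_deriv ?_
  simp only [Pi.div_apply, hv0]
  field_simp
  ring

namespace IsRegularClosedLegendrian

variable {γ : ℝ → ℝ × ℝ × ℝ} (hγ : IsRegularClosedLegendrian γ)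
include hγ

theorem lagrangian_deriv_ne_zero (s : ℝ) :
    (deriv (curveX γ) s, deriv (curveY γ) s) ≠ 0 := by
  have hd := hγ.1.differentiable one_ne_zero s
  have hγ' : deriv γ s = (deriv (curveX γ) s, deriv (curveY γ) s, deriv (curveZ γ) s) :=
    (hd.fst.hasDerivAt.prodMk (hd.snd.fst.hasDerivAt.prodMk hd.snd.snd.hasDerivAt)).deriv
  intro h0
  obtain ⟨hx, hy⟩ := Prod.mk_eq_zero.1 h0
  have hz : deriv (curveZ γ) s = 0 := by simpa [hy] using hγ.2.2.2 s
  exact hγ.2.2.1 s (by rw [hγ', hx, hy, hz]; rfl)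

theorem periodic_deriv_curveX : Periodic (deriv (curveX γ)) (2 * π) :=
  Periodic.deriv fun s => congrArg Prod.fst (hγ.2.1 s)

theorem periodic_deriv_curveY : Periodic (deriv (curveY γ)) (2 * π) :=
  Periodic.deriv fun s => congrArg (fun p => p.2.1) (hγ.2.1 s)

variable {θ : ℝ → ℝ} (hθ : Continuous θ)
  (hpolar : ∀ s, (deriv (curveX γ) s, deriv (curveY γ) s) =
    ‖(deriv (curveX γ) s, deriv (curveY γ) s)‖ • (cos (θ s), sin (θ s)))
include hθ hpolar

theorem angle_add_two_pi (s : ℝ) : θ (s + 2 * π) = θ s + (θ (2 * π) - θ 0) := by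
  have hangle (s : ℝ) : (θ (s + 2 * π) : Angle) = θ s :=
    coe_angle_eq_of_polar (hγ.lagrangian_deriv_ne_zero s)
      (by simpa only [hγ.periodic_deriv_curveX s, hγ.periodic_deriv_curveY s]
        using hpolar (s + 2 * π)) (hpolar s)
  linarith [sub_eq_of_coe_angle_add_eq hθ hangle s]

theorem eventually_floor_angle_sub_floor (hsm : ContDiff ℝ 2 γ) {c : ℝ}
    (hy : deriv (curveY γ) c = 0) (hy' : deriv (deriv (curveY γ)) c ≠ 0) :
    ∀ᶠ s in 𝓝[<] c, ∀ᶠ t in 𝓝[>] c, ⌊θ t / π⌋ - ⌊θ s / π⌋ =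
      if 0 < deriv (curveX γ) c * deriv (deriv (curveY γ)) c then 1 else -1 := by
  have hx : deriv (curveX γ) c ≠ 0 := fun hx =>
    hγ.lagrangian_deriv_ne_zero c (by rw [hx, hy]; rfl)
  have hX : ContDiff ℝ 2 (curveX γ) := contDiff_fst.comp hsm
  have hY : ContDiff ℝ 2 (curveY γ) := contDiff_fst.comp (contDiff_snd.comp hsm)
  have hθ' : HasDerivAt (fun s => θ s / π)
      (deriv (deriv (curveY γ)) c / deriv (curveX γ) c / π) c :=
    (hasDerivAt_angle_of_snd_eq_zero (hX.differentiable_deriv_two c).hasDerivAt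
      (hY.differentiable_deriv_two c).hasDerivAt hθ.continuousAt hpolar hx hy).div_const π
  obtain ⟨k, hk⟩ := sin_eq_zero_iff.1
    ((polar_snd_eq_zero_iff (hγ.lagrangian_deriv_ne_zero c) (hpolar c)).1 hy)
  have hsign : 0 < deriv (deriv (curveY γ)) c / deriv (curveX γ) c / π ↔
      0 < deriv (curveX γ) c * deriv (deriv (curveY γ)) c := by
    rw [div_pos_iff_of_pos_right pi_pos, div_pos_iff, mul_pos_iff]
    tauto
  simpa only [hsign] using hθ'.eventually_floor_sub_floor
    (div_ne_zero (div_ne_zero hy' hx) pi_ne_zero) (by rw [← hk]; field_simp)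

end IsRegularClosedLegendrian

/-- **Cusp formula (averaged form):** `rot γ = (c₋ - c₊)/2`, i.e. twice the
rotation number is the sum over all zeros `s` of `y'` in `[0, 2π)` of
`sign (x'(s)·y''(s))`. -/
theorem two_rot_eq_down_sub_up (γ : ℝ → ℝ × ℝ × ℝ)
    (hsm : ContDiff ℝ 2 γ) (hreg : IsRegularClosedLegendrian γ)
    (S : Finset ℝ) (hSsub : ↑S ⊆ Set.Ico (0:ℝ) (2 * π))
    (hS : ∀ s ∈ Set.Ico (0:ℝ) (2 * π), (deriv (curveY γ) s = 0 ↔ s ∈ S))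
    (hnd : ∀ s ∈ S, deriv (deriv (curveY γ)) s ≠ 0)
    (n : ℤ) (hn : HasLegendrianRotationNumber γ n) :
    2 * n = ∑ s ∈ S,
      (if 0 < deriv (curveX γ) s * deriv (deriv (curveY γ)) s then (1 : ℤ) else -1) := by
  obtain ⟨θ, hθ, hpolar, hθ2π⟩ := hn
  -- a period `[a, a + 2π]` without cusps at its ends, whose cusps are exactly `S`
  obtain ⟨a, ha, ha0, hSa⟩ : ∃ a, -(2 * π) < a ∧ a < 0 ∧ ∀ s ∈ S, s < a + 2 * π := by
    have hnear : ∀ᶠ a in 𝓝 (0 : ℝ), -(2 * π) < a ∧ ∀ s ∈ S, s < a + 2 * π :=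
      (eventually_gt_nhds (by linarith [pi_pos])).and <| (Finset.eventually_all S).2
        fun s hs => continuousAt_const.eventually_lt (continuous_add_const (2 * π)).continuousAt
          (by simpa using (hSsub hs).2)
    obtain ⟨a, ⟨ha, hSa⟩, ha0⟩ := ((hnear.filter_mono nhdsWithin_le_nhds).and
      (self_mem_nhdsWithin : Iio (0 : ℝ) ∈ 𝓝[<] 0)).exists
    exact ⟨a, ha, ha0, hSa⟩
  have hzeros : ∀ x ∈ Icc a (a + 2 * π), deriv (curveY γ) x = 0 → x ∈ S := by
    intro x hx hx0
    rcases lt_or_ge x 0 with hneg | hnn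
    · have := (hS (x + 2 * π) ⟨by linarith [hx.1], by linarith⟩).1
        (by rw [hreg.periodic_deriv_curveY x, hx0])
      linarith [hSa _ this, hx.1]
    · exact (hS x ⟨hnn, by linarith [hx.2]⟩).1 hx0
  have hlattice (x : ℝ) (k : ℤ) (hk : θ x / π = k) : deriv (curveY γ) x = 0 := by
    refine (polar_snd_eq_zero_iff (hreg.lagrangian_deriv_ne_zero x) (hpolar x)).2 ?_
    rw [div_eq_iff pi_ne_zero] at hk
    rw [hk, sin_int_mul_pi]
  have hcount := sub_eq_sum_of_jumps (F := fun s => ⌊θ s / π⌋) (b := a + 2 * π)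
    (by linarith [pi_pos]) S (fun s hs => ⟨by linarith [(hSsub hs).1], hSa s hs⟩)
    (fun s t has hst htb hT => floor_eq_floor_of_forall_ne_intCast hst
      (hθ.div_const π).continuousOn fun x hx k hk =>
        hT x (hzeros x ⟨has.trans hx.1, hx.2.trans htb⟩ (hlattice x k hk)) hx)
    (fun c hc => hreg.eventually_floor_angle_sub_floor hθ hpolar hsm
      ((hS c (hSsub hc)).2 hc) (hnd c hc))
  have hturn : θ (a + 2 * π) / π = θ a / π + ((2 * n : ℤ) : ℝ) := by
    rw [hreg.angle_add_two_pi hθ hpolar a, hθ2π]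
    push_cast
    field_simp
  rw [← hcount]
  simp only [hturn, Int.floor_add_intCast]
  ring
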